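/- arXiv:math/0103034 — 3 statements merged into one kernel-verified Lean document; each statement's English description precedes it below -/
import Mathlib

section
/- For any color tuple k : Fin n → ℕ and filter tuple σ : Fin n → Set ℕ, the set of (k,σ)-adapted partitions of Fin n that refine a given partition R is nonempty (it contains the partition into singletons) and has a greatest element with respect to the refinement order; i.e., there exists a unique (k,σ)-adapted partition R(k,σ) refining R such that every (k,σ)-adapted partition refining R also refines R(k,σ). -/
/-!
Two indices are linked if some adapted refinement of `R` puts them in a common block; the blocks
of `R(k,σ)` are the classes of the equivalence relation generated by these links. Along a chain of
links both the color and the `R`-block stay constant, which gives (A1) and `R(k,σ) ≤ R`.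
For (A2), a chain from `i` to `j > m > i` that never visits `m` must, at its first jump over
`m`, use a link `x < m < y` inside a block of an adapted partition that misses `m`; adaptedness
of that partition gives `k i = k x ∈ σ m`.
-/

/-- A partition `R` of `Fin n` is `(k,σ)`-adapted if
(A1) the color function `k` is constant on each block, and
(A2) whenever `i < m < j` with `i, j` in a block `B` and `m ∉ B`, then `k i ∈ σ m`. -/
def IsAdapted {n : ℕ} (R : Finpartition (Finset.univ : Finset (Fin n)))
    (k : Fin n → ℕ) (σ : Fin n → Set ℕ) : Prop :=
  (∀ B ∈ R.parts, ∀ i ∈ B, ∀ j ∈ B, k i = k j) ∧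
  (∀ B ∈ R.parts, ∀ i ∈ B, ∀ j ∈ B, ∀ m : Fin n, i < m → m < j → m ∉ B → k i ∈ σ m)

open Finset Relation

namespace Finpartition

variable {α : Type*} [DecidableEq α] {s : Finset α} {P Q : Finpartition s}

theorem mem_part_comm {a b : α} (ha : a ∈ s) (hb : b ∈ s) :
    a ∈ P.part b ↔ b ∈ P.part a := by
  rw [P.mem_part_iff_part_eq_part ha hb, P.mem_part_iff_part_eq_part hb ha, eq_comm]

theorem le_iff_forall_part_subset_part : P ≤ Q ↔ ∀ a ∈ s, P.part a ⊆ Q.part a := by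
  constructor
  · intro h a ha
    obtain ⟨t, ht, hPt⟩ := h (P.part_mem.2 ha)
    rwa [Q.part_eq_of_mem ht (hPt (P.mem_part ha))]
  · intro h t ht
    obtain ⟨a, hat⟩ := P.nonempty_of_mem_parts ht
    have ha : a ∈ s := P.le ht hat
    exact ⟨Q.part a, Q.part_mem.2 ha, P.part_eq_of_mem ht hat ▸ h a ha⟩

end Finpartition

namespace Relation.ReflTransGen

variable {α : Type*} {r : α → α → Prop} {a b : α}

theorem apply_eq_of_forall_rel {β : Type*} {f : α → β} (hf : ∀ x y, r x y → f x = f y)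
    (hab : ReflTransGen r a b) : f a = f b := by
  induction hab with
  | refl => rfl
  | tail _ hcd ih => exact ih.trans (hf _ _ hcd)

theorem exists_rel_of_le_of_lt [LinearOrder α] {m : α} (hab : ReflTransGen r a b)
    (ham : a ≤ m) (hmb : m < b) : ∃ x y, ReflTransGen r a x ∧ r x y ∧ x ≤ m ∧ m < y := by
  induction hab with
  | refl => exact absurd (ham.trans_lt hmb) (lt_irrefl a)
  | @tail c d hac hcd ih =>
    rcases le_or_gt c m with hcm | hmc
    · exact ⟨c, d, hac, hcd, hcm, hmb⟩
    · exact ih hmc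

end Relation.ReflTransGen

theorem isAdapted_bot {n : ℕ} (k : Fin n → ℕ) (σ : Fin n → Set ℕ) :
    IsAdapted (⊥ : Finpartition (univ : Finset (Fin n))) k σ := by
  constructor
  · intro B hB i hi j hj
    obtain ⟨a, -, rfl⟩ := Finpartition.mem_bot_iff.1 hB
    rw [mem_singleton.1 hi, mem_singleton.1 hj]
  · intro B hB i hi j hj m him hmj _
    obtain ⟨a, -, rfl⟩ := Finpartition.mem_bot_iff.1 hB
    obtain rfl := mem_singleton.1 hi
    obtain rfl := mem_singleton.1 hj
    exact absurd (him.trans hmj) (lt_irrefl _)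

section GreatestAdaptedRefinement

variable {n : ℕ} (k : Fin n → ℕ) (σ : Fin n → Set ℕ)
  (R : Finpartition (univ : Finset (Fin n)))

def AdaptedLink (i j : Fin n) : Prop :=
  ∃ P : Finpartition (univ : Finset (Fin n)), P ≤ R ∧ IsAdapted P k σ ∧ j ∈ P.part i

instance : Std.Symm (AdaptedLink k σ R) where
  symm _ _ := fun ⟨P, hPR, hP, hij⟩ =>
    ⟨P, hPR, hP, (P.mem_part_comm (mem_univ _) (mem_univ _)).1 hij⟩

def adaptedSetoid : Setoid (Fin n) where
  r := ReflTransGen (AdaptedLink k σ R)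
  iseqv := ⟨fun _ => .refl, fun h => Std.Symm.symm _ _ h, .trans⟩

noncomputable def greatestAdaptedRefinement : Finpartition (univ : Finset (Fin n)) :=
  letI := Classical.decRel (adaptedSetoid k σ R)
  Finpartition.ofSetoid (adaptedSetoid k σ R)

variable {k σ R}

theorem mem_part_greatestAdaptedRefinement {a b : Fin n} :
    b ∈ (greatestAdaptedRefinement k σ R).part a ↔ ReflTransGen (AdaptedLink k σ R) a b := by
  let := Classical.decRel (adaptedSetoid k σ R)
  exact Finpartition.mem_part_ofSetoid_iff_rel

theorem AdaptedLink.color_eq {i j : Fin n} (h : AdaptedLink k σ R i j) : k i = k j := by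
  obtain ⟨P, -, hP, hij⟩ := h
  exact hP.1 _ (P.part_mem.2 (mem_univ i)) i (P.mem_part (mem_univ i)) j hij

theorem AdaptedLink.part_eq {i j : Fin n} (h : AdaptedLink k σ R i j) : R.part i = R.part j := by
  obtain ⟨P, hPR, -, hij⟩ := h
  have hj : j ∈ R.part i := Finpartition.le_iff_forall_part_subset_part.1 hPR i (mem_univ i) hij
  exact ((R.mem_part_iff_part_eq_part (mem_univ j) (mem_univ i)).1 hj).symm

theorem greatestAdaptedRefinement_le : greatestAdaptedRefinement k σ R ≤ R := by
  refine Finpartition.le_iff_forall_part_subset_part.2 fun a _ b hb => ?_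
  rw [mem_part_greatestAdaptedRefinement] at hb
  have hR : R.part a = R.part b :=
    ReflTransGen.apply_eq_of_forall_rel (fun _ _ => AdaptedLink.part_eq) hb
  exact hR ▸ R.mem_part (mem_univ b)

theorem isAdapted_greatestAdaptedRefinement :
    IsAdapted (greatestAdaptedRefinement k σ R) k σ := by
  have mem_iff {B i j} (hB : B ∈ (greatestAdaptedRefinement k σ R).parts) (hi : i ∈ B) :
      j ∈ B ↔ ReflTransGen (AdaptedLink k σ R) i j := by
    rw [← (greatestAdaptedRefinement k σ R).part_eq_of_mem hB hi,
      mem_part_greatestAdaptedRefinement]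
  refine ⟨fun B hB i hi j hj => ?_, fun B hB i hi j hj m him hmj hmB => ?_⟩
  · exact ReflTransGen.apply_eq_of_forall_rel (fun _ _ => AdaptedLink.color_eq)
      ((mem_iff hB hi).1 hj)
  · obtain ⟨x, y, hix, ⟨P, hPR, hP, hxy⟩, hx_le, hmy⟩ :=
      ((mem_iff hB hi).1 hj).exists_rel_of_le_of_lt him.le hmj
    have hxm : x < m := hx_le.lt_of_ne fun h => hmB ((mem_iff hB hi).2 (h ▸ hix))
    have hmP : m ∉ P.part x := fun h => hmB ((mem_iff hB hi).2 (hix.tail ⟨P, hPR, hP, h⟩))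
    rw [ReflTransGen.apply_eq_of_forall_rel (fun _ _ => AdaptedLink.color_eq) hix]
    exact hP.2 _ (P.part_mem.2 (mem_univ x)) x (P.mem_part (mem_univ x)) y hxy m hxm hmy hmP

theorem le_greatestAdaptedRefinement {P : Finpartition (univ : Finset (Fin n))}
    (hPR : P ≤ R) (hP : IsAdapted P k σ) : P ≤ greatestAdaptedRefinement k σ R :=
  Finpartition.le_iff_forall_part_subset_part.2 fun _ _ _ hb =>
    mem_part_greatestAdaptedRefinement.2 (.single ⟨P, hPR, hP, hb⟩)

end GreatestAdaptedRefinement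

/-- the set of (k,σ)-adapted refinements of any partition `R` of `Fin n` is
nonempty (the partition into singletons, i.e. `⊥`, is adapted and refines `R`) and has a
unique greatest element w.r.t. the refinement order. -/
theorem stmt2 (n : ℕ) (k : Fin n → ℕ) (σ : Fin n → Set ℕ)
    (R : Finpartition (Finset.univ : Finset (Fin n))) :
    IsAdapted (⊥ : Finpartition (Finset.univ : Finset (Fin n))) k σ ∧
    (⊥ : Finpartition (Finset.univ : Finset (Fin n))) ≤ R ∧
    ∃! R' : Finpartition (Finset.univ : Finset (Fin n)),
      R' ≤ R ∧ IsAdapted R' k σ ∧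
        ∀ R'' : Finpartition (Finset.univ : Finset (Fin n)),
          R'' ≤ R → IsAdapted R'' k σ → R'' ≤ R' := by
  refine ⟨isAdapted_bot k σ, bot_le, greatestAdaptedRefinement k σ R,
    ⟨greatestAdaptedRefinement_le, isAdapted_greatestAdaptedRefinement,
      fun _ => le_greatestAdaptedRefinement⟩, ?_⟩
  rintro R' ⟨hR'R, hR', hR'_greatest⟩
  exact le_antisymm (le_greatestAdaptedRefinement hR'R hR')
    (hR'_greatest _ greatestAdaptedRefinement_le isAdapted_greatestAdaptedRefinement)
end

section
/- Let Q : ℕ → ℂ satisfy Q(1) = 0 and Q(2) = 1, let k : Fin n → ℕ and σ : Fin n → Set ℕ, and for each partition R of Fin n set w(R) = ∏_{B ∈ R(k,σ)} Q(|B|), where R(k,σ) is the coarsest (k,σ)-adapted refinement of R. Then lim_{N→∞} N^{-n/2} Σ_{R ∈ P_n} (N)_{b(R)} · w(R) equals the number of (k,σ)-adapted pair partitions of Fin n if n is even, and equals 0 if n is odd. -/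
open Filter

/-- If `P` refines `Q` and has no more parts than `Q`, then `P = Q`. -/
lemma finpart_eq_of_le_card {α : Type*} [DecidableEq α] {s : Finset α}
    {P Q : Finpartition s} (h : P ≤ Q) (hc : P.parts.card ≤ Q.parts.card) : P = Q := by
  have key : ∀ b ∈ Q.parts, b ∈ P.parts := by
    have h2 : ∀ b ∈ Q.parts, ∃ c ∈ P.parts, c ≤ b := fun b hb =>
      Finpartition.exists_le_of_le h hb
    choose f hf1 hf2 using h2
    have hinj : Set.InjOn (fun b : {x // x ∈ Q.parts} => f b b.2) Q.parts.attach := by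
      intro b _ c _ hbc
      have hbc' : f b b.2 = f c c.2 := hbc
      have hne : (f b b.2).Nonempty := Finset.nonempty_iff_ne_empty.2 (P.ne_bot (hf1 b b.2))
      obtain ⟨x, hx⟩ := hne
      have hxb : x ∈ (b : Finset α) := hf2 b b.2 hx
      have hxc : x ∈ (c : Finset α) := by
        rw [hbc'] at hx; exact hf2 c c.2 hx
      exact Subtype.coe_injective (Q.eq_of_mem_parts b.2 c.2 hxb hxc)
    have himage : Finset.image (fun b : {x // x ∈ Q.parts} => f b b.2) Q.parts.attach = P.parts := by
      apply Finset.eq_of_subset_of_card_le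
      · intro c hc'
        simp only [Finset.mem_image] at hc'
        obtain ⟨b, _, rfl⟩ := hc'
        exact hf1 b b.2
      · rw [Finset.card_image_of_injOn hinj, Finset.card_attach]
        exact hc
    intro b hb
    have hsub : b ⊆ f b hb := by
      intro x hx
      have hxs : x ∈ s := Q.le hb hx
      obtain ⟨c, hcP, hxc⟩ := P.exists_mem hxs
      rw [← himage] at hcP
      simp only [Finset.mem_image] at hcP
      obtain ⟨b', _, rfl⟩ := hcP
      have hxb' : x ∈ (b' : Finset α) := hf2 b' b'.2 hxc
      have hbb : (b' : Finset α) = b := Q.eq_of_mem_parts b'.2 hb hxb' hx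
      have hb'eq : b' = (⟨b, hb⟩ : {x // x ∈ Q.parts}) := Subtype.coe_injective hbb
      rw [hb'eq] at hxc
      exact hxc
    have hfin : b = f b hb := Finset.Subset.antisymm hsub (hf2 b hb)
    rw [hfin]; exact hf1 b hb
  refine le_antisymm h (fun b hb => ⟨b, key b hb, le_rfl⟩)

lemma tendsto_descFactorial_div_pow (b : ℕ) :
    Tendsto (fun N : ℕ => (N.descFactorial b : ℝ) / (N : ℝ) ^ b) atTop (nhds 1) := by
  have h1 : Tendsto (fun N : ℕ => ∏ i ∈ Finset.range b, (1 - (i : ℝ) / N)) atTop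
      (nhds (∏ _i ∈ Finset.range b, (1:ℝ))) := by
    apply tendsto_finset_prod
    intro i _
    have h0 := tendsto_const_div_atTop_nhds_zero_nat (i : ℝ)
    have := (tendsto_const_nhds (x := (1:ℝ)) (f := atTop)).sub h0
    simpa using this
  rw [Finset.prod_const_one] at h1
  apply h1.congr'
  filter_upwards [eventually_ge_atTop b, eventually_ge_atTop 1] with N hNb hN1
  have hN0 : (N : ℝ) ≠ 0 := by positivity
  rw [Nat.descFactorial_eq_prod_range, Nat.cast_prod,
    eq_div_iff (by positivity : (N : ℝ) ^ b ≠ 0)]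
  have hNb' : (N : ℝ) ^ b = ∏ _i ∈ Finset.range b, (N : ℝ) := by
    rw [Finset.prod_const, Finset.card_range]
  rw [hNb', ← Finset.prod_mul_distrib]
  apply Finset.prod_congr rfl
  intro i hi
  rw [Finset.mem_range] at hi
  have hiN : i ≤ N := hi.le.trans hNb
  rw [Nat.cast_sub hiN]
  field_simp

lemma tendA' {b n : ℕ} (h : 2 * b < n) :
    Tendsto (fun N : ℕ => (N.descFactorial b : ℝ) / (N : ℝ) ^ ((n : ℝ) / 2)) atTop (nhds 0) := by
  have hd := tendsto_descFactorial_div_pow b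
  have hexp : (0:ℝ) < (n : ℝ) / 2 - b := by
    have : (2 * b : ℝ) < n := by exact_mod_cast h
    linarith
  have hr : Tendsto (fun N : ℕ => (N : ℝ) ^ ((b : ℝ) - (n : ℝ) / 2)) atTop (nhds 0) := by
    have h2 := (tendsto_rpow_neg_atTop hexp).comp (tendsto_natCast_atTop_atTop (R := ℝ))
    simpa [Function.comp_def, neg_sub] using h2
  have hmul := hd.mul hr
  rw [one_mul] at hmul
  apply hmul.congr'
  filter_upwards [eventually_ge_atTop 1] with N hN1
  have hN0 : (0:ℝ) < N := by exact_mod_cast hN1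
  rw [Real.rpow_sub hN0, Real.rpow_natCast]
  rw [div_mul_div_comm, mul_comm ((N:ℝ)^b), ← div_mul_div_comm, div_self (by positivity), mul_one]

lemma tendB' {b n : ℕ} (h : 2 * b = n) :
    Tendsto (fun N : ℕ => (N.descFactorial b : ℝ) / (N : ℝ) ^ ((n : ℝ) / 2)) atTop (nhds 1) := by
  apply (tendsto_descFactorial_div_pow b).congr'
  filter_upwards [eventually_ge_atTop 1] with N hN1
  have hbn : ((n : ℝ) / 2) = (b : ℕ) := by
    have : (2 * b : ℝ) = n := by exact_mod_cast h
    linarith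
  rw [hbn, Real.rpow_natCast]

open scoped Classical

/-- combinatorial filtered central limit theorem: with `Q 1 = 0`,
`Q 2 = 1`, and `Rk R` the coarsest (k,σ)-adapted refinement of `R`, the normalized sums
`N^{-n/2} Σ_R (N)_{b R} ∏_{B ∈ (Rk R).parts} Q |B|` converge, as `N → ∞`, to the number
of (k,σ)-adapted pair partitions of `Fin n` if `n` is even, and to `0` if `n` is odd. -/
theorem stmt7 (n : ℕ) (k : Fin n → ℕ) (σ : Fin n → Set ℕ) (Q : ℕ → ℂ)
    (hQ1 : Q 1 = 0) (hQ2 : Q 2 = 1)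
    (Rk : Finpartition (Finset.univ : Finset (Fin n)) →
      Finpartition (Finset.univ : Finset (Fin n)))
    (hRk : ∀ R, Rk R ≤ R ∧ IsAdapted (Rk R) k σ ∧
      ∀ R', R' ≤ R → IsAdapted R' k σ → R' ≤ Rk R) :
    Filter.Tendsto
      (fun N : ℕ =>
        ((((N : ℝ) ^ ((n : ℝ) / 2))⁻¹ : ℝ) : ℂ) *
          ∑ R : Finpartition (Finset.univ : Finset (Fin n)),
            (N.descFactorial R.parts.card : ℂ) * ∏ B ∈ (Rk R).parts, Q B.card)
      Filter.atTop
      (nhds (if Even n then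
          (Nat.card {R : Finpartition (Finset.univ : Finset (Fin n)) //
            (∀ B ∈ R.parts, B.card = 2) ∧ IsAdapted R k σ} : ℂ)
        else 0)) := by
  set p : Finpartition (Finset.univ : Finset (Fin n)) → Prop :=
    fun R => (∀ B ∈ R.parts, B.card = 2) ∧ IsAdapted R k σ with hp
  have main : ∀ R : Finpartition (Finset.univ : Finset (Fin n)),
      Filter.Tendsto (fun N : ℕ =>
        ((((N : ℝ) ^ ((n : ℝ) / 2))⁻¹ : ℝ) : ℂ) *
          ((N.descFactorial R.parts.card : ℂ) * ∏ B ∈ (Rk R).parts, Q B.card))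
      Filter.atTop (nhds (if p R then 1 else 0)) := by
    intro R
    set w : ℂ := ∏ B ∈ (Rk R).parts, Q B.card with hwdef
    set b : ℕ := R.parts.card with hbdef
    have hfun : ∀ N : ℕ,
        ((((N : ℝ) ^ ((n : ℝ) / 2))⁻¹ : ℝ) : ℂ) * ((N.descFactorial b : ℂ) * w)
          = (((N.descFactorial b : ℝ) / (N : ℝ) ^ ((n : ℝ) / 2) : ℝ) : ℂ) * w := by
      intro N
      rw [Complex.ofReal_div, Complex.ofReal_natCast, Complex.ofReal_inv]
      ring
    have hofReal : ∀ (c : ℝ),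
        Filter.Tendsto (fun N : ℕ => (N.descFactorial b : ℝ) / (N : ℝ) ^ ((n : ℝ) / 2))
          Filter.atTop (nhds c) →
        Filter.Tendsto (fun N : ℕ =>
          (((N.descFactorial b : ℝ) / (N : ℝ) ^ ((n : ℝ) / 2) : ℝ) : ℂ))
          Filter.atTop (nhds (c : ℂ)) := fun c hc =>
      (Complex.continuous_ofReal.tendsto c).comp hc
    have hsumR : ∑ B ∈ R.parts, B.card = n := by
      simpa using R.sum_card_parts
    by_cases hPR : p R
    · obtain ⟨hpair, hadapt⟩ := hPR
      have hRkR : Rk R = R := le_antisymm (hRk R).1 ((hRk R).2.2 R le_rfl hadapt)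
      have hw1 : w = 1 := by
        rw [hwdef, hRkR]
        rw [Finset.prod_congr rfl (fun B hB => by rw [hpair B hB, hQ2])]
        exact Finset.prod_const_one
      have h2b : 2 * b = n := by
        rw [← hsumR, Finset.sum_congr rfl hpair, Finset.sum_const, smul_eq_mul, hbdef, mul_comm]
      rw [if_pos ⟨hpair, hadapt⟩]
      have h2 := (hofReal 1 (tendB' h2b)).mul_const w
      have h3 : ((1:ℝ):ℂ) * w = 1 := by rw [Complex.ofReal_one, one_mul, hw1]
      rw [h3] at h2
      exact h2.congr (fun N => (hfun N).symm)
    · rw [if_neg hPR]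
      by_cases hw : w = 0
      · have : ∀ N : ℕ,
            ((((N : ℝ) ^ ((n : ℝ) / 2))⁻¹ : ℝ) : ℂ) * ((N.descFactorial b : ℂ) * w) = 0 := by
          intro N; rw [hw, mul_zero, mul_zero]
        exact Filter.Tendsto.congr (fun N => (this N).symm) tendsto_const_nhds
      · have hcard2 : ∀ B ∈ (Rk R).parts, 2 ≤ B.card := by
          intro B hB
          have hne : B.Nonempty := Finset.nonempty_iff_ne_empty.2 ((Rk R).ne_bot hB)
          rcases Nat.lt_or_ge B.card 2 with h2 | h2
          · exfalso
            have h1 : B.card = 1 := by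
              have := Finset.card_pos.2 hne
              omega
            exact hw (Finset.prod_eq_zero hB (by rw [h1, hQ1]))
          · exact h2
        have hs1 : ∑ B ∈ (Rk R).parts, B.card = n := by
          simpa using (Rk R).sum_card_parts
        have h2le : 2 * (Rk R).parts.card ≤ n := by
          calc 2 * (Rk R).parts.card = ∑ _B ∈ (Rk R).parts, 2 := by
                rw [Finset.sum_const, smul_eq_mul, mul_comm]
            _ ≤ ∑ B ∈ (Rk R).parts, B.card := Finset.sum_le_sum hcard2
            _ = n := hs1
        have hble : b ≤ (Rk R).parts.card := Finpartition.card_mono (hRk R).1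
        have h2bn : 2 * b ≤ n := by omega
        have hne2 : 2 * b ≠ n := by
          intro heq
          have hReq : Rk R = R := finpart_eq_of_le_card (hRk R).1 (by omega)
          have hcard2' : ∀ B ∈ R.parts, 2 ≤ B.card := fun B hB =>
            hcard2 B (by rw [hReq]; exact hB)
          have hall2 : ∀ B ∈ R.parts, B.card = 2 := by
            by_contra hcon
            push_neg at hcon
            obtain ⟨B0, hB0, hB0ne⟩ := hcon
            have hlt : ∑ _B ∈ R.parts, 2 < ∑ B ∈ R.parts, B.card := by
              apply Finset.sum_lt_sum
              · intro B hB; exact hcard2' B hB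
              · exact ⟨B0, hB0, lt_of_le_of_ne (hcard2' B0 hB0) (Ne.symm hB0ne)⟩
            rw [Finset.sum_const, smul_eq_mul] at hlt
            rw [hsumR] at hlt
            omega
          exact hPR ⟨hall2, hReq ▸ (hRk R).2.1⟩
        have h2lt : 2 * b < n := lt_of_le_of_ne h2bn hne2
        have := (hofReal 0 (tendA' h2lt)).mul_const w
        rw [Complex.ofReal_zero, zero_mul] at this
        exact this.congr (fun N => (hfun N).symm)
  have hsum := tendsto_finset_sum (Finset.univ :
      Finset (Finpartition (Finset.univ : Finset (Fin n)))) (fun R _ => main R)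
  have hval : (∑ R : Finpartition (Finset.univ : Finset (Fin n)),
      (if p R then (1:ℂ) else 0)) = (if Even n then
          (Nat.card {R : Finpartition (Finset.univ : Finset (Fin n)) //
            (∀ B ∈ R.parts, B.card = 2) ∧ IsAdapted R k σ} : ℂ)
        else 0) := by
    by_cases hev : Even n
    · rw [if_pos hev, Finset.sum_boole, Nat.card_eq_fintype_card, Fintype.card_subtype]
    · rw [if_neg hev]
      apply Finset.sum_eq_zero
      intro R _
      rw [if_neg]
      intro hPR
      apply hev
      have hsumR : ∑ B ∈ R.parts, B.card = n := by simpa using R.sum_card_parts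
      have h2 : ∑ B ∈ R.parts, B.card = 2 * R.parts.card := by
        rw [Finset.sum_congr rfl hPR.1, Finset.sum_const, smul_eq_mul, mul_comm]
      exact ⟨R.parts.card, by omega⟩
  rw [← hval]
  exact hsum.congr (fun N => by rw [Finset.mul_sum])
end

section
/- Let Q_N : ℕ → ℂ (N ∈ ℕ) be such that N · Q_N(j) → Q(j) as N → ∞ for every j ≥ 1, with Q : ℕ → ℂ. Let k : Fin n → ℕ and σ : Fin n → Set ℕ. Then lim_{N→∞} Σ_{R ∈ P_n} (N)_{b(R)} ∏_{B ∈ R(k,σ)} Q_N(|B|) = Σ_{R (k,σ)-adapted} ∏_{B ∈ R} Q(|B|). In particular, if Q(j) = λ for all j, the limit equals Σ_{R (k,σ)-adapted} λ^{b(R)} (the filtered Poisson limit). -/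
open scoped Classical

open Filter Finset

private lemma tendsto_sub_div_aux (i : ℕ) :
    Tendsto (fun N : ℕ => ((N - i : ℕ) : ℂ) / N) atTop (nhds 1) := by
  have h2 : Tendsto (fun N : ℕ => (i : ℂ) / N) atTop (nhds 0) := by
    have h := (Complex.continuous_ofReal.tendsto 0).comp
      (tendsto_const_div_atTop_nhds_zero_nat (i : ℝ))
    simpa [Function.comp_def] using h
  have h0 : Tendsto (fun N : ℕ => 1 - (i : ℂ) / N) atTop (nhds 1) := by
    simpa using tendsto_const_nhds.sub h2
  refine h0.congr' ?_
  filter_upwards [eventually_ge_atTop (max i 1)] with N hN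
  have hi : i ≤ N := le_trans (le_max_left _ _) hN
  have hN0 : (N : ℂ) ≠ 0 := by
    have : (1 : ℕ) ≤ N := le_trans (le_max_right _ _) hN
    exact_mod_cast Nat.cast_ne_zero.2 (by omega)
  rw [Nat.cast_sub hi]
  field_simp

private lemma tendsto_desc_one (b : ℕ) :
    Tendsto (fun N : ℕ => (N.descFactorial b : ℂ) / (N : ℂ) ^ b) atTop (nhds 1) := by
  have heq : ∀ N : ℕ, (N.descFactorial b : ℂ) / (N : ℂ) ^ b
      = ∏ i ∈ range b, ((N - i : ℕ) : ℂ) / N := by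
    intro N
    rw [Nat.descFactorial_eq_prod_range, Nat.cast_prod, prod_div_distrib, prod_const,
      card_range]
  simp only [heq]
  have h := tendsto_finset_prod (f := fun (i : ℕ) (N : ℕ) => ((N - i : ℕ) : ℂ) / N)
    (a := fun _ => (1 : ℂ)) (range b) (fun i _ => tendsto_sub_div_aux i)
  simpa using h

private lemma tendsto_desc_zero (b d : ℕ) (h : b < d) :
    Tendsto (fun N : ℕ => (N.descFactorial b : ℂ) / (N : ℂ) ^ d) atTop (nhds 0) := by
  have h2 : Tendsto (fun N : ℕ => ((1 : ℂ) / N) ^ (d - b)) atTop (nhds 0) := by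
    have h1 : Tendsto (fun N : ℕ => (1 : ℂ) / N) atTop (nhds 0) := by
      have h := (Complex.continuous_ofReal.tendsto 0).comp
        (tendsto_const_div_atTop_nhds_zero_nat (1 : ℝ))
      simpa [Function.comp_def] using h
    have := h1.pow (d - b)
    simpa [zero_pow (show d - b ≠ 0 by omega)] using this
  have h1 : Tendsto (fun N : ℕ =>
      ((N.descFactorial b : ℂ) / (N : ℂ) ^ b) * ((1 : ℂ) / N) ^ (d - b)) atTop (nhds 0) := by
    simpa using (tendsto_desc_one b).mul h2
  refine h1.congr' ?_
  filter_upwards [eventually_ge_atTop 1] with N hN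
  have hN0 : (N : ℂ) ≠ 0 := by exact_mod_cast Nat.cast_ne_zero.2 (by omega)
  rw [div_pow, one_pow, div_mul_div_comm, mul_one, ← pow_add]
  congr 2
  omega

/-- If `P` is a strict refinement of `Q`, it has strictly more parts. -/
private lemma card_parts_strict {α : Type*} [DecidableEq α] {s : Finset α}
    {P Q : Finpartition s} (h : P ≤ Q) (hne : P ≠ Q) : Q.parts.card < P.parts.card := by
  refine lt_of_le_of_ne (Finpartition.card_mono h) fun hc => hne ?_
  -- from card equality conclude P = Q
  have hex : ∀ b : Finset α, b ∈ P.parts → ∃ c ∈ Q.parts, b ⊆ c := fun b hb => h hb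
  choose! f hfQ hfsub using hex
  have hsurj : ∀ c ∈ Q.parts, ∃ b, ∃ _ : b ∈ P.parts, f b = c := by
    intro c hc
    obtain ⟨b, hb, hbc⟩ := Finpartition.exists_le_of_le h hc
    obtain ⟨x, hx⟩ := P.nonempty_of_mem_parts hb
    exact ⟨b, hb, Q.eq_of_mem_parts (hfQ b hb) hc (hfsub b hb hx) (hbc hx)⟩
  have hinj : ∀ ⦃b₁⦄, b₁ ∈ P.parts → ∀ ⦃b₂⦄, b₂ ∈ P.parts → f b₁ = f b₂ → b₁ = b₂ := by
    have := Finset.inj_on_of_surj_on_of_card_le (s := P.parts) (t := Q.parts)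
      (fun b _ => f b) (fun b hb => hfQ b hb) hsurj (le_of_eq hc.symm)
    exact fun b₁ h₁ b₂ h₂ he => this h₁ h₂ he
  have himage : P.parts.image f = Q.parts := by
    apply Finset.eq_of_subset_of_card_le
    · intro c hcmem
      obtain ⟨b, hb, rfl⟩ := Finset.mem_image.1 hcmem
      exact hfQ b hb
    · rw [Finset.card_image_of_injOn hinj, hc]
  have hsum : ∑ b ∈ P.parts, (f b).card = ∑ b ∈ P.parts, b.card := by
    have h1 : ∑ c ∈ P.parts.image f, c.card = ∑ b ∈ P.parts, (f b).card :=
      Finset.sum_image (fun b hb b' hb' => hinj hb hb')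
    rw [himage] at h1
    rw [← h1, Finpartition.sum_card_parts, Finpartition.sum_card_parts]
  have hpt : ∀ b ∈ P.parts, b.card = (f b).card :=
    fun b hb => ((Finset.sum_eq_sum_iff_of_le
      (fun b hb => Finset.card_le_card (hfsub b hb))).1 hsum.symm b hb)
  have hparts : P.parts = Q.parts := by
    apply Finset.eq_of_subset_of_card_le _ (le_of_eq hc)
    intro b hb
    have : b = f b := Finset.eq_of_subset_of_card_le (hfsub b hb) (le_of_eq (hpt b hb).symm)
    rw [this]
    exact hfQ b hb
  exact Finpartition.ext hparts

/-- combinatorial filtered Poisson-type limit theorem: if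
`N · Q_N j → Q j` for every `j ≥ 1`, and `Rk R` is the coarsest (k,σ)-adapted
refinement of `R`, then
`Σ_R (N)_{b R} ∏_{B ∈ (Rk R).parts} Q_N |B| → Σ_{R adapted} ∏_{B ∈ R.parts} Q |B|`. -/
theorem stmt8 (n : ℕ) (k : Fin n → ℕ) (σ : Fin n → Set ℕ)
    (QN : ℕ → ℕ → ℂ) (Q : ℕ → ℂ)
    (hQ : ∀ j : ℕ, 1 ≤ j →
      Filter.Tendsto (fun N : ℕ => (N : ℂ) * QN N j) Filter.atTop (nhds (Q j)))
    (Rk : Finpartition (Finset.univ : Finset (Fin n)) →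
      Finpartition (Finset.univ : Finset (Fin n)))
    (hRk : ∀ R, Rk R ≤ R ∧ IsAdapted (Rk R) k σ ∧
      ∀ R', R' ≤ R → IsAdapted R' k σ → R' ≤ Rk R) :
    Filter.Tendsto
      (fun N : ℕ =>
        ∑ R : Finpartition (Finset.univ : Finset (Fin n)),
          (N.descFactorial R.parts.card : ℂ) * ∏ B ∈ (Rk R).parts, QN N B.card)
      Filter.atTop
      (nhds (∑ R : Finpartition (Finset.univ : Finset (Fin n)),
        if IsAdapted R k σ then ∏ B ∈ R.parts, Q B.card else 0)) := by
  apply tendsto_finset_sum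
  intro R _
  obtain ⟨hle, had, hmax⟩ := hRk R
  set b := R.parts.card with hb
  set d := (Rk R).parts.card with hd
  have hbd : b ≤ d := Finpartition.card_mono hle
  have hLprod : Tendsto (fun N : ℕ => ∏ B ∈ (Rk R).parts, ((N : ℂ) * QN N B.card)) atTop
      (nhds (∏ B ∈ (Rk R).parts, Q B.card)) :=
    tendsto_finset_prod _ fun B hB =>
      hQ B.card ((Rk R).nonempty_of_mem_parts hB).card_pos
  have hsplit : ∀ᶠ N : ℕ in atTop,
      ((N.descFactorial b : ℂ) / (N : ℂ) ^ d) *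
        ∏ B ∈ (Rk R).parts, ((N : ℂ) * QN N B.card)
      = (N.descFactorial b : ℂ) * ∏ B ∈ (Rk R).parts, QN N B.card := by
    filter_upwards [eventually_ge_atTop 1] with N hN
    have hN0 : (N : ℂ) ≠ 0 := by exact_mod_cast Nat.cast_ne_zero.2 (by omega)
    rw [Finset.prod_mul_distrib, Finset.prod_const, ← hd, ← mul_assoc,
      div_mul_cancel₀ _ (pow_ne_zero d hN0)]
  by_cases hA : IsAdapted R k σ
  · have hRkR : Rk R = R := le_antisymm hle (hmax R le_rfl hA)
    rw [if_pos hA]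
    have hdb : d = b := by rw [hd, hb, hRkR]
    have h1 := (tendsto_desc_one b).mul hLprod
    rw [one_mul] at h1
    have h2 : Tendsto (fun N : ℕ =>
        ((N.descFactorial b : ℂ) / (N : ℂ) ^ d) *
          ∏ B ∈ (Rk R).parts, ((N : ℂ) * QN N B.card)) atTop
        (nhds (∏ B ∈ R.parts, Q B.card)) := by
      rw [hdb, hRkR]
      rw [hRkR] at h1
      exact h1
    exact h2.congr' hsplit
  · rw [if_neg hA]
    have hne : Rk R ≠ R := fun he => hA (he ▸ had)
    have hlt : b < d := card_parts_strict hle hne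
    have : Tendsto (fun N : ℕ =>
        ((N.descFactorial b : ℂ) / (N : ℂ) ^ d) *
          ∏ B ∈ (Rk R).parts, ((N : ℂ) * QN N B.card)) atTop (nhds 0) := by
      have := (tendsto_desc_zero b d hlt).mul hLprod
      rwa [zero_mul] at this
    exact this.congr' hsplit
end
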